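/- arXiv:2508.18814 — 4 statements merged into one kernel-verified Lean document; each statement's English description precedes it below -/
import Mathlib

section
/- Let k ≥ 1 and let φ, ψ be ring automorphisms of the formal power series ring ℂ[[x,y]] (induced by biholomorphic germs fixing 0). If φ(f) ≡ f mod 𝔪² for all f and ψ(f) ≡ f mod 𝔪ᵏ for all f, where 𝔪 = (x,y) is the maximal ideal, then the commutator automorphism φ⁻¹∘ψ⁻¹∘φ∘ψ satisfies (φ⁻¹∘ψ⁻¹∘φ∘ψ)(f) ≡ f mod 𝔪ᵏ⁺¹ for all f ∈ ℂ[[x,y]]. -/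
/-!
Write `α ≡ id mod J` for `∀ f, α f - f ∈ J`. If `α ≡ id mod 𝔪^(a+1)`, then the Leibniz-type
identity `α (u v) - u v = α u (α v - v) + (α u - u) v` shows by induction that `α - id` raises
the `𝔪`-adic order by `a`. Hence for `β ≡ id mod 𝔪^(b+1)`, the difference
`α (β f) - β (α f) = (α - id)(β f - f) - (β - id)(α f - f)` lies in `𝔪^(a+b+1)`; since `α`, `β`
and their inverses preserve every power of `𝔪`, so does
`α⁻¹ (β⁻¹ (α (β f))) - f = α⁻¹ (β⁻¹ (α (β f) - β (α f)))`.
The theorem is the case `a = 1`, `b = k - 1`.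
-/

namespace RingEquiv

variable {R : Type*} [CommRing R] {I : Ideal R} {a b : ℕ} (α β : R ≃+* R)

theorem symm_apply_sub_mem {J : Ideal R} (hα : ∀ f, α f - f ∈ J) (f : R) :
    α.symm f - f ∈ J := by
  simpa using J.neg_mem (hα (α.symm f))

theorem apply_sub_mem_pow_add (hα : ∀ f, α f - f ∈ I ^ (a + 1)) {h : R} :
    ∀ {b : ℕ}, h ∈ I ^ b → α h - h ∈ I ^ (a + b)
  | 0, _ => Ideal.pow_le_pow_right a.le_succ (hα h)
  | b + 1, hh => by
    rw [pow_succ'] at hh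
    refine Submodule.mul_induction_on hh (fun u hu v hv => ?_) (fun x y hx hy => ?_)
    · have hαu : α u ∈ I := by
        simpa using I.add_mem (Ideal.pow_le_self a.succ_ne_zero (hα u)) hu
      have hleibniz : α (u * v) - u * v = α u * (α v - v) + (α u - u) * v := by
        rw [map_mul]; ring
      rw [hleibniz]
      refine Ideal.add_mem _ ?_ ?_
      · rw [← add_assoc, pow_succ']
        exact Ideal.mul_mem_mul hαu (apply_sub_mem_pow_add hα hv)
      · rw [show a + (b + 1) = a + 1 + b by omega, pow_add]
        exact Ideal.mul_mem_mul (hα u) hv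
    · simpa [map_add, add_sub_add_comm] using Ideal.add_mem _ hx hy

theorem apply_mem_pow (hα : ∀ f, α f - f ∈ I ^ (a + 1)) {h : R} (hh : h ∈ I ^ b) :
    α h ∈ I ^ b := by
  have hdiff : α h - h ∈ I ^ b :=
    Ideal.pow_le_pow_right (Nat.le_add_left b a) (α.apply_sub_mem_pow_add hα hh)
  simpa using (I ^ b).add_mem hdiff hh

theorem apply_apply_sub_apply_apply_mem_pow (hα : ∀ f, α f - f ∈ I ^ (a + 1))
    (hβ : ∀ f, β f - f ∈ I ^ (b + 1)) (f : R) : α (β f) - β (α f) ∈ I ^ (a + b + 1) := by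
  have hαβ := α.apply_sub_mem_pow_add hα (hβ f)
  have hβα := β.apply_sub_mem_pow_add hβ (hα f)
  rw [← add_assoc] at hαβ
  rw [← add_assoc, add_comm b] at hβα
  convert (I ^ (a + b + 1)).sub_mem hαβ hβα using 1
  simp only [map_sub]
  ring

theorem symm_symm_apply_apply_sub_mem_pow (hα : ∀ f, α f - f ∈ I ^ (a + 1))
    (hβ : ∀ f, β f - f ∈ I ^ (b + 1)) (f : R) :
    α.symm (β.symm (α (β f))) - f ∈ I ^ (a + b + 1) := by
  set g := α (β f) - β (α f)
  have hcomm : α.symm (β.symm (α (β f))) - f = α.symm (β.symm g) := by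
    rw [show α (β f) = g + β (α f) by ring, map_add, symm_apply_apply, map_add,
      symm_apply_apply, add_sub_cancel_right]
  rw [hcomm]
  exact α.symm.apply_mem_pow (α.symm_apply_sub_mem hα)
    (β.symm.apply_mem_pow (β.symm_apply_sub_mem hβ)
      (α.apply_apply_sub_apply_apply_mem_pow β hα hβ f))

end RingEquiv

theorem stmt_0_general (k : ℕ) (hk : 1 ≤ k)
    (φ ψ : MvPowerSeries (Fin 2) ℂ ≃+* MvPowerSeries (Fin 2) ℂ)
    (m : Ideal (MvPowerSeries (Fin 2) ℂ))
    (hφ : ∀ f, φ f - f ∈ m ^ 2)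
    (hψ : ∀ f, ψ f - f ∈ m ^ k) :
    ∀ f, φ.symm (ψ.symm (φ (ψ f))) - f ∈ m ^ (k + 1) := by
  obtain ⟨n, rfl⟩ := Nat.exists_eq_add_of_le' hk
  intro f
  simpa [add_comm 1 n] using φ.symm_symm_apply_apply_sub_mem_pow ψ (a := 1) hφ hψ f

/-- commutator of automorphisms of ℂ[[x,y]] congruent to id mod 𝔪² and 𝔪ᵏ
is congruent to id mod 𝔪ᵏ⁺¹. -/
theorem stmt_0 (k : ℕ) (hk : 1 ≤ k)
    (φ ψ : MvPowerSeries (Fin 2) ℂ ≃+* MvPowerSeries (Fin 2) ℂ)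
    (m : Ideal (MvPowerSeries (Fin 2) ℂ))
    (hm : m = Ideal.span {MvPowerSeries.X 0, MvPowerSeries.X 1})
    (hφ : ∀ f, φ f - f ∈ m ^ 2)
    (hψ : ∀ f, ψ f - f ∈ m ^ k) :
    ∀ f, φ.symm (ψ.symm (φ (ψ f))) - f ∈ m ^ (k + 1) :=
  stmt_0_general k hk φ ψ m hφ hψ
end

section
/- Let ρ: SL₂(ℝ) → GL₃(ℝ) be given by ρ([[a,b],[c,d]]) = [[a², 2ab, b²],[ac, ad+bc, bd],[c², 2cd, d²]]. If ρ(A) has all integer entries for some A = [[a,b],[c,d]] ∈ SL₂(ℝ), then A ∈ SL₂(ℤ), i.e., a, b, c, d are all integers. -/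
/-! All pairwise products of `a, b, c, d` are integers: `ab` and `cd` because their doubles and
squares are, and `ad` because `2ad = (ad + bc) + 1` and `(ad)² = a²d²` are. A real vector whose
pairwise products are integers lies in `√s • ℤⁿ` for a squarefree `s`: write a nonzero coordinate as
`k√s`; for any coordinate `y`, `(k√s y)² = k²s y²` forces `ks ∣ k√s y`. Finally `1 = ad - bc ∈ sℤ`,
so `s = 1`. -/

theorem mul_dvd_of_sq_eq_sq_mul_squarefree {R : Type*} [CommRing R] [IsDomain R] [GCDMonoid R]
    {k s m X : R} (hk : k ≠ 0) (hs : Squarefree s) (h : m ^ 2 = k ^ 2 * s * X) :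
    k * s ∣ m := by
  obtain ⟨u, rfl⟩ : k ∣ m :=
    (IsIntegrallyClosed.pow_dvd_pow_iff two_ne_zero).1 ⟨s * X, by rw [h, mul_assoc]⟩
  have hu : u ^ 2 = s * X := by
    apply mul_left_cancel₀ (pow_ne_zero 2 hk)
    linear_combination h
  exact mul_dvd_mul_left k ((hs.dvd_pow_iff_dvd two_ne_zero).1 ⟨X, hu⟩)

theorem exists_int_eq_of_two_mul_of_sq {y : ℝ} (h2 : ∃ m : ℤ, (m : ℝ) = 2 * y)
    (hsq : ∃ m : ℤ, (m : ℝ) = y ^ 2) : ∃ m : ℤ, (m : ℝ) = y := by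
  obtain ⟨m, hm⟩ := h2
  obtain ⟨n, hn⟩ := hsq
  have hmn : m ^ 2 = 2 * (2 * n) := by
    have : (m : ℝ) ^ 2 = 2 * (2 * n) := by rw [hm, hn]; ring
    exact_mod_cast this
  obtain ⟨r, rfl⟩ := (Int.even_pow.1 ⟨2 * n, by rw [hmn]; ring⟩).1
  exact ⟨r, by push_cast at hm; linarith⟩

theorem exists_int_eq_sqrt_mul_of_int_mul_of_int_sq {s : ℕ} (hs : Squarefree s) {k : ℤ}
    (hk : k ≠ 0) {y : ℝ} (h : ∃ m : ℤ, (m : ℝ) = k * √s * y) (hy : ∃ m : ℤ, (m : ℝ) = y ^ 2) :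
    ∃ w : ℤ, y = √s * w := by
  obtain ⟨m, hm⟩ := h
  obtain ⟨X, hX⟩ := hy
  have hss : √s ^ 2 = s := Real.sq_sqrt s.cast_nonneg
  have hmX : m ^ 2 = k ^ 2 * s * X := by
    have : (m : ℝ) ^ 2 = k ^ 2 * √s ^ 2 * y ^ 2 := by rw [hm]; ring
    rw [hss, ← hX] at this
    exact_mod_cast this
  obtain ⟨w, rfl⟩ := mul_dvd_of_sq_eq_sq_mul_squarefree hk (Int.squarefree_natCast.2 hs) hmX
  refine ⟨w, mul_left_cancel₀ (mul_ne_zero (Int.cast_ne_zero.2 hk)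
    (Real.sqrt_ne_zero'.2 (Nat.cast_pos.2 (Nat.pos_of_ne_zero hs.ne_zero)))) ?_⟩
  push_cast at hm
  linear_combination -hm - k * w * hss

theorem exists_squarefree_eq_sqrt_mul_int {ι : Type*} (x : ι → ℝ)
    (hx : ∀ i j, ∃ m : ℤ, (m : ℝ) = x i * x j) :
    ∃ s : ℕ, Squarefree s ∧ ∃ w : ι → ℤ, ∀ i, x i = √s * w i := by
  by_cases h0 : ∀ i, x i = 0
  · exact ⟨1, squarefree_one, 0, fun i => by simp [h0 i]⟩
  push Not at h0
  obtain ⟨i₀, hi₀⟩ := h0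
  obtain ⟨N, hN⟩ := hx i₀ i₀
  obtain ⟨s, k, hks, hs⟩ := Nat.sq_mul_squarefree N.natAbs
  have hN : x i₀ ^ 2 = (k * √s) ^ 2 := by
    have : (N.natAbs : ℝ) = N := by
      rw [Nat.cast_natAbs, Int.cast_abs, abs_of_nonneg (hN ▸ mul_self_nonneg _)]
    rw [mul_pow, Real.sq_sqrt s.cast_nonneg, sq, ← hN, ← this, ← hks]
    push_cast; ring
  obtain ⟨k', hk', hxk'⟩ : ∃ k' : ℤ, k' ≠ 0 ∧ x i₀ = k' * √s := by
    have hk : (k : ℤ) ≠ 0 := by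
      rintro hk
      apply hi₀
      simpa [show k = 0 by exact_mod_cast hk] using hN
    rcases sq_eq_sq_iff_eq_or_eq_neg.1 hN with h | h
    · exact ⟨k, hk, by simpa using h⟩
    · exact ⟨-k, neg_ne_zero.2 hk, by push_cast; linarith⟩
  have hcoord : ∀ j, ∃ w : ℤ, x j = √s * w := fun j =>
    exists_int_eq_sqrt_mul_of_int_mul_of_int_sq hs hk' (by simpa [hxk'] using hx i₀ j)
      (by simpa [sq] using hx j j)
  choose w hw using hcoord
  exact ⟨s, hs, w, hw⟩

theorem forall_int_mul_of_int_symSq {a b c d : ℝ} (h : a * d - b * c = 1)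
    (h1 : ∃ m : ℤ, (m : ℝ) = a ^ 2) (h2 : ∃ m : ℤ, (m : ℝ) = 2 * a * b)
    (h3 : ∃ m : ℤ, (m : ℝ) = b ^ 2) (h4 : ∃ m : ℤ, (m : ℝ) = a * c)
    (h5 : ∃ m : ℤ, (m : ℝ) = a * d + b * c) (h6 : ∃ m : ℤ, (m : ℝ) = b * d)
    (h7 : ∃ m : ℤ, (m : ℝ) = c ^ 2) (h8 : ∃ m : ℤ, (m : ℝ) = 2 * c * d)
    (h9 : ∃ m : ℤ, (m : ℝ) = d ^ 2) :
    ∀ i j, ∃ m : ℤ, (m : ℝ) = ![a, b, c, d] i * ![a, b, c, d] j := by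
  have ⟨A, hA⟩ := h1
  have ⟨B, hB⟩ := h3
  have ⟨C, hC⟩ := h7
  have ⟨D, hD⟩ := h9
  obtain ⟨K, hK⟩ := h5
  have hab := exists_int_eq_of_two_mul_of_sq (y := a * b) (by simpa only [mul_assoc] using h2)
    ⟨A * B, by push_cast; rw [hA, hB]; ring⟩
  have hcd := exists_int_eq_of_two_mul_of_sq (y := c * d) (by simpa only [mul_assoc] using h8)
    ⟨C * D, by push_cast; rw [hC, hD]; ring⟩
  have had := exists_int_eq_of_two_mul_of_sq (y := a * d)
    ⟨K + 1, by push_cast; linarith⟩ ⟨A * D, by push_cast; rw [hA, hD]; ring⟩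
  have hbc : ∃ m : ℤ, (m : ℝ) = b * c := by
    obtain ⟨R, hR⟩ := had
    exact ⟨R - 1, by push_cast; linarith⟩
  intro i j
  fin_cases i <;> fin_cases j <;> simp only [← sq] <;>
    first | assumption | (rw [mul_comm]; assumption)

/-- if A = [[a,b],[c,d]] ∈ SL₂(ℝ) and all entries of
ρ(A) = [[a²,2ab,b²],[ac,ad+bc,bd],[c²,2cd,d²]] are integers, then a,b,c,d ∈ ℤ. -/
theorem stmt_9 (a b c d : ℝ) (h : a * d - b * c = 1)
    (h1 : ∃ m : ℤ, (m : ℝ) = a ^ 2) (h2 : ∃ m : ℤ, (m : ℝ) = 2 * a * b)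
    (h3 : ∃ m : ℤ, (m : ℝ) = b ^ 2) (h4 : ∃ m : ℤ, (m : ℝ) = a * c)
    (h5 : ∃ m : ℤ, (m : ℝ) = a * d + b * c) (h6 : ∃ m : ℤ, (m : ℝ) = b * d)
    (h7 : ∃ m : ℤ, (m : ℝ) = c ^ 2) (h8 : ∃ m : ℤ, (m : ℝ) = 2 * c * d)
    (h9 : ∃ m : ℤ, (m : ℝ) = d ^ 2) :
    (∃ m : ℤ, (m : ℝ) = a) ∧ (∃ m : ℤ, (m : ℝ) = b) ∧
    (∃ m : ℤ, (m : ℝ) = c) ∧ (∃ m : ℤ, (m : ℝ) = d) := by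
  obtain ⟨s, hs, w, hw⟩ := exists_squarefree_eq_sqrt_mul_int _
    (forall_int_mul_of_int_symSq h h1 h2 h3 h4 h5 h6 h7 h8 h9)
  obtain ⟨ha, hb, hc, hd⟩ : a = √s * w 0 ∧ b = √s * w 1 ∧ c = √s * w 2 ∧ d = √s * w 3 :=
    ⟨hw 0, hw 1, hw 2, hw 3⟩
  have hs1 : s = 1 := by
    have hdet : ((s : ℤ) : ℝ) * (w 0 * w 3 - w 1 * w 2 : ℤ) = 1 := by
      push_cast
      rw [← Real.sq_sqrt s.cast_nonneg, ← h, ha, hb, hc, hd]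
      ring
    exact_mod_cast Int.eq_one_of_mul_eq_one_right (Int.natCast_nonneg s) (by exact_mod_cast hdet)
  simp only [hs1, Nat.cast_one, Real.sqrt_one, one_mul] at ha hb hc hd
  exact ⟨⟨_, ha.symm⟩, ⟨_, hb.symm⟩, ⟨_, hc.symm⟩, ⟨_, hd.symm⟩⟩
end

section
/- The subgroup of GL₃(ℤ) generated by the three involutions I_x = [[-1,0,0],[2,1,0],[2,0,1]], I_y = [[1,2,0],[0,-1,0],[0,2,1]], and I_z = [[1,0,2],[0,1,2],[0,0,-1]] is isomorphic to the free product (ℤ/2ℤ) * (ℤ/2ℤ) * (ℤ/2ℤ); i.e., no nonempty reduced word alternating in I_x, I_y, I_z equals the identity. -/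
open Matrix

def MM : Fin 3 → Matrix (Fin 3) (Fin 3) ℤ :=
  ![!![-1, 0, 0; 2, 1, 0; 2, 0, 1], !![1, 2, 0; 0, -1, 0; 0, 2, 1],
    !![1, 0, 2; 0, 1, 2; 0, 0, -1]]

lemma mulVec0 (u : Fin 3 → ℤ) :
    (MM 0).mulVec u = ![-u 0, 2 * u 0 + u 1, 2 * u 0 + u 2] := by
  funext l; fin_cases l <;>
    simp [MM, Matrix.mulVec, dotProduct, Fin.sum_univ_three]

lemma mulVec1 (u : Fin 3 → ℤ) :
    (MM 1).mulVec u = ![u 0 + 2 * u 1, -u 1, 2 * u 1 + u 2] := by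
  funext l; fin_cases l <;>
    simp [MM, Matrix.mulVec, dotProduct, Fin.sum_univ_three]

lemma mulVec2 (u : Fin 3 → ℤ) :
    (MM 2).mulVec u = ![u 0 + 2 * u 2, u 1 + 2 * u 2, -u 2] := by
  funext l; fin_cases l <;>
    simp [MM, Matrix.mulVec, dotProduct, Fin.sum_univ_three]

def Good (j : Fin 3) (u : Fin 3 → ℤ) : Prop :=
  u j < 0 ∧ ∀ l, l ≠ j → 0 < u l + u j

lemma good_sum (j i : Fin 3) (hi : j ≠ i) (u : Fin 3 → ℤ) (h : Good i u) :
    0 < u j ∧ ∀ l, 0 < u j + u l := by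
  obtain ⟨h1, h2⟩ := h
  have hb := h2 j hi
  have hj : 0 < u j := by linarith
  refine ⟨hj, fun l => ?_⟩
  by_cases hl : l = i
  · subst hl; linarith
  · have := h2 l hl; linarith

lemma step0 (i : Fin 3) (hi : (0 : Fin 3) ≠ i) (u : Fin 3 → ℤ) (h : Good i u) :
    Good 0 ((MM 0).mulVec u) := by
  obtain ⟨hj, hs⟩ := good_sum 0 i hi u h
  have h1 := hs 1; have h2 := hs 2
  rw [mulVec0]
  refine ⟨by simp; linarith, ?_⟩
  intro l hl
  fin_cases l
  · simp at hl
  · simp; linarith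
  · simp; linarith

lemma step1 (i : Fin 3) (hi : (1 : Fin 3) ≠ i) (u : Fin 3 → ℤ) (h : Good i u) :
    Good 1 ((MM 1).mulVec u) := by
  obtain ⟨hj, hs⟩ := good_sum 1 i hi u h
  have h0 := hs 0; have h2 := hs 2
  rw [mulVec1]
  refine ⟨by simp; linarith, ?_⟩
  intro l hl
  fin_cases l
  · simp; linarith
  · simp at hl
  · simp; linarith

lemma step2 (i : Fin 3) (hi : (2 : Fin 3) ≠ i) (u : Fin 3 → ℤ) (h : Good i u) :
    Good 2 ((MM 2).mulVec u) := by
  obtain ⟨hj, hs⟩ := good_sum 2 i hi u h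
  have h0 := hs 0; have h1 := hs 1
  rw [mulVec2]
  refine ⟨by simp; linarith, ?_⟩
  intro l hl
  fin_cases l
  · simp; linarith
  · simp; linarith
  · simp at hl

lemma step (j i : Fin 3) (hji : j ≠ i) (u : Fin 3 → ℤ) (h : Good i u) :
    Good j ((MM j).mulVec u) := by
  fin_cases j
  · exact step0 i hji u h
  · exact step1 i hji u h
  · exact step2 i hji u h

lemma base0 : Good 0 ((MM 0).mulVec ![1, 1, 1]) := by
  rw [mulVec0]
  refine ⟨by simp, ?_⟩
  intro l hl; fin_cases l
  · simp at hl
  · simp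
  · simp

lemma base1 : Good 1 ((MM 1).mulVec ![1, 1, 1]) := by
  rw [mulVec1]
  refine ⟨by simp, ?_⟩
  intro l hl; fin_cases l
  · simp
  · simp at hl
  · simp

lemma base2 : Good 2 ((MM 2).mulVec ![1, 1, 1]) := by
  rw [mulVec2]
  refine ⟨by simp, ?_⟩
  intro l hl; fin_cases l
  · simp
  · simp
  · simp at hl

lemma base (j : Fin 3) : Good j ((MM j).mulVec ![1, 1, 1]) := by
  fin_cases j
  · exact base0
  · exact base1
  · exact base2

lemma main_invariant (k : ℕ) : ∀ w : Fin (k + 1) → Fin 3,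
    (∀ (i : Fin (k + 1)) (h : (i : ℕ) + 1 < k + 1), w i ≠ w ⟨(i : ℕ) + 1, h⟩) →
    Good (w 0) (((List.ofFn fun i => MM (w i)).prod).mulVec ![1, 1, 1]) := by
  induction k with
  | zero =>
    intro w _
    have : (List.ofFn fun i : Fin 1 => MM (w i)).prod = MM (w 0) := by
      simp [List.ofFn_succ]
    rw [this]
    exact base (w 0)
  | succ k ih =>
    intro w hred
    have h01 : w 0 ≠ w 1 := by
      have := hred ⟨0, by omega⟩ (by simp)
      simpa using this
    have hred' : ∀ (i : Fin (k + 1)) (h : (i : ℕ) + 1 < k + 1),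
        w i.succ ≠ w (⟨(i : ℕ) + 1, h⟩ : Fin (k+1)).succ := by
      intro i h
      have := hred i.succ (by simp; omega)
      convert this using 2
      rfl
    have hGood := ih (fun i => w i.succ) hred'
    rw [List.ofFn_succ, List.prod_cons, ← Matrix.mulVec_mulVec]
    simp only [Fin.succ_zero_eq_one] at hGood
    exact step (w 0) (w 1) h01 _ hGood

/-- the group generated by the involutions I_x, I_y, I_z is the free
product (ℤ/2) * (ℤ/2) * (ℤ/2): no nonempty reduced word alternating in I_x, I_y, I_z
equals the identity. -/
theorem stmt_15 :
    let Ix : Matrix (Fin 3) (Fin 3) ℤ := !![-1, 0, 0; 2, 1, 0; 2, 0, 1]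
    let Iy : Matrix (Fin 3) (Fin 3) ℤ := !![1, 2, 0; 0, -1, 0; 0, 2, 1]
    let Iz : Matrix (Fin 3) (Fin 3) ℤ := !![1, 0, 2; 0, 1, 2; 0, 0, -1]
    let M : Fin 3 → Matrix (Fin 3) (Fin 3) ℤ := ![Ix, Iy, Iz]
    ∀ (k : ℕ), 0 < k → ∀ w : Fin k → Fin 3,
      (∀ (i : Fin k) (h : (i : ℕ) + 1 < k), w i ≠ w ⟨(i : ℕ) + 1, h⟩) →
      (List.ofFn fun i => M (w i)).prod ≠ 1 := by
  intro Ix Iy Iz M k hk w hred hprod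
  match k, hk with
  | (k' + 1), _ =>
    have hM : M = MM := by
      funext j
      fin_cases j <;> rfl
    rw [hM] at hprod
    have hG := main_invariant k' w hred
    rw [hprod, Matrix.one_mulVec] at hG
    have h1 : ∀ j : Fin 3, (![1, 1, 1] : Fin 3 → ℤ) j = 1 := by decide
    have := hG.1
    rw [h1] at this
    exact absurd this (by norm_num)
end

section
/- Let a, b ∈ ℂ with a² - ab + b² ≠ 0. Then there do not exist (y₀:y₁) ∈ ℙ¹ and (z₀:z₁) ∈ ℙ¹ (not both coordinates zero in either pair) satisfying simultaneously: y₁²z₀² + y₀²z₀z₁ + y₁²z₁² = 0, y₀y₁(az₀² + bz₁²) = 0, and y₀²z₀² + y₁²z₀z₁ + y₀²z₁² = 0. -/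
/-! Write `S = z₀² + z₁²` and `P = z₀z₁`. The first and third equations say that the circulant
matrices with rows `(y₀², y₁²)` and `(S, P)` each kill the other's vector, so both determinants
vanish: `y₀⁴ = y₁⁴` and `S² = P²`, that is `z₀⁴ + z₀²z₁² + z₁⁴ = 0`. The first forces
`y₀y₁ ≠ 0`, so the middle equation gives `a z₀² + b z₁² = 0`. For `(u, v) = (z₀², z₁²)` on
the line `au + bv = 0` one has `b²(u² + uv + v²) = (a² - ab + b²) u²` and
`a²(u² + uv + v²) = (a² - ab + b²) v²`, hence `a² - ab + b² = 0`. -/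

section

variable {M₀ : Type*} [MonoidWithZero M₀] [NoZeroDivisors M₀]

theorem eq_zero_of_mul_eq_zero_of_ne_zero_or {c x y : M₀} (hx : c * x = 0) (hy : c * y = 0)
    (h : x ≠ 0 ∨ y ≠ 0) : c = 0 :=
  h.elim (fun hx₀ => (mul_eq_zero.1 hx).resolve_right hx₀)
    fun hy₀ => (mul_eq_zero.1 hy).resolve_right hy₀

theorem mul_ne_zero_of_pow_eq_pow {x y : M₀} {n : ℕ} (hn : n ≠ 0) (hxy : x ^ n = y ^ n)
    (h : x ≠ 0 ∨ y ≠ 0) : x * y ≠ 0 := by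
  have hxy₀ : x = 0 ↔ y = 0 := by rw [← pow_eq_zero_iff hn, hxy, pow_eq_zero_iff hn]
  exact mul_ne_zero (h.elim id (mt hxy₀.1)) (h.elim (mt hxy₀.2) id)

end

section

variable {R : Type*} [CommRing R] [NoZeroDivisors R]

theorem sq_eq_sq_of_circulant_mul_eq_zero {p₀ p₁ q₀ q₁ : R} (h₀ : p₀ * q₀ + p₁ * q₁ = 0)
    (h₁ : p₀ * q₁ + p₁ * q₀ = 0) (hq : q₀ ≠ 0 ∨ q₁ ≠ 0) : p₀ ^ 2 = p₁ ^ 2 :=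
  sub_eq_zero.1 <| eq_zero_of_mul_eq_zero_of_ne_zero_or
    (by linear_combination p₀ * h₀ - p₁ * h₁) (by linear_combination p₀ * h₁ - p₁ * h₀) hq

theorem sq_add_sq_ne_zero_or_mul_ne_zero {z₀ z₁ : R} (hz : z₀ ≠ 0 ∨ z₁ ≠ 0) :
    z₀ ^ 2 + z₁ ^ 2 ≠ 0 ∨ z₀ * z₁ ≠ 0 := by
  by_contra! ⟨hS, hP⟩
  have h₀ : z₀ ^ 4 = 0 := by linear_combination z₀ ^ 2 * hS - z₀ * z₁ * hP
  have h₁ : z₁ ^ 4 = 0 := by linear_combination z₁ ^ 2 * hS - z₀ * z₁ * hP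
  exact hz.elim (· (pow_eq_zero_iff four_ne_zero |>.1 h₀))
    (· (pow_eq_zero_iff four_ne_zero |>.1 h₁))

theorem sq_sub_mul_add_sq_eq_zero {a b u v : R} (hline : a * u + b * v = 0)
    (hform : u ^ 2 + u * v + v ^ 2 = 0) (h : u ≠ 0 ∨ v ≠ 0) : a ^ 2 - a * b + b ^ 2 = 0 :=
  eq_zero_of_mul_eq_zero_of_ne_zero_or
    (by linear_combination b ^ 2 * hform + (a * u - b * v - b * u) * hline)
    (by linear_combination a ^ 2 * hform + (b * v - a * u - a * v) * hline)
    (h.imp (pow_ne_zero 2) (pow_ne_zero 2))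

end

/-- if a² - ab + b² ≠ 0 then the projection π_x contracts no curve: there
is no point ((y₀:y₁),(z₀:z₁)) ∈ ℙ¹ × ℙ¹ where all three coefficient equations vanish. -/
theorem stmt_17 (a b : ℂ) (h : a ^ 2 - a * b + b ^ 2 ≠ 0) :
    ¬ ∃ y0 y1 z0 z1 : ℂ, (y0 ≠ 0 ∨ y1 ≠ 0) ∧ (z0 ≠ 0 ∨ z1 ≠ 0) ∧
      y1 ^ 2 * z0 ^ 2 + y0 ^ 2 * z0 * z1 + y1 ^ 2 * z1 ^ 2 = 0 ∧
      y0 * y1 * (a * z0 ^ 2 + b * z1 ^ 2) = 0 ∧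
      y0 ^ 2 * z0 ^ 2 + y1 ^ 2 * z0 * z1 + y0 ^ 2 * z1 ^ 2 = 0 := by
  rintro ⟨y0, y1, z0, z1, hy, hz, e1, e2, e3⟩
  have hy4 : y0 ^ 4 = y1 ^ 4 := by
    linear_combination sq_eq_sq_of_circulant_mul_eq_zero (p₀ := y0 ^ 2) (p₁ := y1 ^ 2)
      (by linear_combination e3) (by linear_combination e1) (sq_add_sq_ne_zero_or_mul_ne_zero hz)
  have hz4 : (z0 ^ 2 + z1 ^ 2) ^ 2 = (z0 * z1) ^ 2 :=
    sq_eq_sq_of_circulant_mul_eq_zero (q₀ := y0 ^ 2) (q₁ := y1 ^ 2)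
      (by linear_combination e3) (by linear_combination e1) (hy.imp (pow_ne_zero 2) (pow_ne_zero 2))
  have hline : a * z0 ^ 2 + b * z1 ^ 2 = 0 :=
    (mul_eq_zero.1 e2).resolve_left (mul_ne_zero_of_pow_eq_pow four_ne_zero hy4 hy)
  exact h <| sq_sub_mul_add_sq_eq_zero hline (by linear_combination hz4)
    (hz.imp (pow_ne_zero 2) (pow_ne_zero 2))
end
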